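/- arXiv:1208.5872 — 4 statements merged into one kernel-verified Lean document; each statement's English description precedes it below -/
import Mathlib

section
/- (Non-stabilizability of the critical push-pull network, hitting-time form.) For any non-idling policy 𝒫, any realization (X_n) of the induced Markov chain started at a state x, and any state y with λ1·x(1) − λ2·x(2) ≠ λ1·y(1) − λ2·y(2), the hitting time T_y = inf{n ≥ 0 : X_n = y} has infinite expectation: E[T_y] = ∞. -/
open MeasureTheory
open scoped ENNReal

/-- State space of the push-pull network: pairs of queue lengths `(x₁, x₂) ∈ ℤ₊²`. -/
abbrev PPState : Type := ℕ × ℕ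

/-- An action of the two servers: `true` means push, `false` means pull. -/
abbrev PPAction : Type := Bool × Bool

/-- A non-idling policy: at `(x, 0)` server 1 must push, at `(0, x)` server 2 must push. -/
def NonIdling (P : PPState → PPAction) : Prop :=
  (∀ x : ℕ, (P (x, 0)).1 = true) ∧ (∀ x : ℕ, (P (0, x)).2 = true)

/-- Transition probabilities of the chain induced by the policy `P` for the *critical*
push-pull network (`μ₁ = λ₁`, `μ₂ = λ₂`). -/
noncomputable def ppTrans (l1 l2 : ℝ) (P : PPState → PPAction) (z z' : PPState) : ℝ :=
  match P z with
  | (true, true) =>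
      (if z' = (z.1 + 1, z.2) then l1 / (l1 + l2) else 0) +
      (if z' = (z.1, z.2 + 1) then l2 / (l1 + l2) else 0)
  | (false, false) =>
      (if z' = (z.1 - 1, z.2) then l1 / (l1 + l2) else 0) +
      (if z' = (z.1, z.2 - 1) then l2 / (l1 + l2) else 0)
  | (true, false) =>
      (if z' = (z.1 + 1, z.2) then 1 / 2 else 0) +
      (if z' = (z.1 - 1, z.2) then 1 / 2 else 0)
  | (false, true) =>
      (if z' = (z.1, z.2 + 1) then 1 / 2 else 0) +
      (if z' = (z.1, z.2 - 1) then 1 / 2 else 0)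

/-- The linear function `g((x₁,x₂)) = λ₁ x₁ - λ₂ x₂`. -/
noncomputable def ppG (l1 l2 : ℝ) (z : PPState) : ℝ := l1 * z.1 - l2 * z.2

/-- `X` is a realization of a Markov chain with one-step transition probabilities `p`
on the filtered probability space `(Ω, ℱ, μ)`: it is adapted, and almost surely on
`{X n = z}`, the conditional probability given `ℱ n` that `X (n+1) = z'` equals `p z z'`. -/
def IsRealization {Ω : Type} {S : Type} [MeasurableSpace S] {mΩ : MeasurableSpace Ω}
    (μ : Measure Ω) (ℱ : Filtration ℕ mΩ) (X : ℕ → Ω → S) (p : S → S → ℝ) : Prop :=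
  (∀ n, Measurable[ℱ n] (X n)) ∧
  ∀ (n : ℕ) (z z' : S), ∀ᵐ ω ∂μ, X n ω = z →
    (μ[Set.indicator {ω' | X (n + 1) ω' = z'} (fun _ => (1 : ℝ)) | ℱ n]) ω = p z z'

/-- The hitting time of the state `y` by the process `X`, as an extended nonnegative
real number; it equals `∞` on the event that `y` is never hit. -/
noncomputable def hitTime {Ω S : Type*} (X : ℕ → Ω → S) (y : S) (ω : Ω) : ℝ≥0∞ :=
  sInf {t : ℝ≥0∞ | ∃ n : ℕ, X n ω = y ∧ (n : ℝ≥0∞) = t}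

/-!
The function `f z = z₁ / λ₁ - z₂ / λ₂` is harmonic for the chain under every non-idling policy
(this is where criticality `μᵢ = λᵢ` enters), and every possible step changes it by `±1/λ₁` or
`±1/λ₂`. So `f(Xₙ)` is a martingale with bounded increments, and if `E[T_y] < ∞` optional
stopping gives `f(X_k) = E[f(X_{T_y}) | ℱ_k] = f(y)` almost surely for `k = 0` and, since `T_y ≥ 1`
when `x ≠ y`, also for `k = 1`. This contradicts `f(X₁) ≠ f(X₀)`.
-/

open Filter Topology

lemma abs_le_abs_zero_add_mul_of_abs_sub_le {u : ℕ → ℝ} {C : ℝ}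
    (h : ∀ n, |u (n + 1) - u n| ≤ C) (n : ℕ) : |u n| ≤ |u 0| + n * C := by
  have := dist_le_range_sum_of_dist_le (f := u) n (d := fun _ ↦ C) fun _ ↦ by
    rw [dist_comm, Real.dist_eq]; exact h _
  simp only [Finset.sum_const, Finset.card_range, nsmul_eq_mul, Real.dist_eq] at this
  linarith [abs_sub_abs_le_abs_sub (u n) (u 0), abs_sub_comm (u 0) (u n)]

section IteSum

variable {S : Type*} [DecidableEq S] {a b : S} {c d : ℝ}

lemma tsum_ite_add_ite_mul (g : S → ℝ) :
    ∑' z, ((if z = a then c else 0) + (if z = b then d else 0)) * g z = c * g a + d * g b := by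
  simp only [add_mul, ite_mul, zero_mul]
  rw [Summable.tsum_add (summable_of_ne_finset_zero (s := {a}) (by simp_all))
    (summable_of_ne_finset_zero (s := {b}) (by simp_all)), tsum_ite_eq, tsum_ite_eq]

lemma eq_or_eq_of_ite_add_ite_ne_zero {z : S}
    (h : (if z = a then c else 0) + (if z = b then d else 0) ≠ 0) : z = a ∨ z = b := by
  by_contra! hz
  simp [hz.1, hz.2] at h

end IteSum

noncomputable def ppHarmonic (l1 l2 : ℝ) (z : PPState) : ℝ := z.1 / l1 - z.2 / l2

section PushPull

variable {l1 l2 : ℝ} {P : PPState → PPAction}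

lemma NonIdling.one_le_snd (hP : NonIdling P) {z : PPState} (h : (P z).1 = false) :
    1 ≤ z.2 := by
  obtain ⟨a, b⟩ := z
  refine Nat.one_le_iff_ne_zero.2 ?_
  rintro (rfl : b = 0)
  simp [hP.1 a] at h

lemma NonIdling.one_le_fst (hP : NonIdling P) {z : PPState} (h : (P z).2 = false) :
    1 ≤ z.1 := by
  obtain ⟨a, b⟩ := z
  refine Nat.one_le_iff_ne_zero.2 ?_
  rintro (rfl : a = 0)
  simp [hP.2 b] at h

/- A pull move is `zᵢ - 1` in `ℕ`, which would truncate at `0`; non-idling rules this out, so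
in both lemmas below every move changes exactly one coordinate by exactly one. -/

lemma tsum_ppTrans_mul_ppHarmonic (hl1 : 0 < l1) (hl2 : 0 < l2) (hP : NonIdling P)
    (z : PPState) : ∑' z', ppTrans l1 l2 P z z' * ppHarmonic l1 l2 z' = ppHarmonic l1 l2 z := by
  obtain ⟨z1, z2⟩ := z
  have h1 : (P (z1, z2)).2 = false → 1 ≤ z1 := hP.one_le_fst
  have h2 : (P (z1, z2)).1 = false → 1 ≤ z2 := hP.one_le_snd
  rcases hPz : P (z1, z2) with ⟨_ | _, _ | _⟩ <;> simp only [hPz, forall_const] at h1 h2 <;>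
    simp only [ppTrans, hPz, tsum_ite_add_ite_mul, ppHarmonic] <;> push_cast [h1, h2] <;>
    field_simp <;> ring

lemma abs_ppHarmonic_sub_of_ppTrans_ne_zero (hl1 : 0 < l1) (hl2 : 0 < l2) (hP : NonIdling P)
    {z z' : PPState} (h : ppTrans l1 l2 P z z' ≠ 0) :
    |ppHarmonic l1 l2 z' - ppHarmonic l1 l2 z| = l1⁻¹ ∨
      |ppHarmonic l1 l2 z' - ppHarmonic l1 l2 z| = l2⁻¹ := by
  obtain ⟨z1, z2⟩ := z
  have h1 : (P (z1, z2)).2 = false → 1 ≤ z1 := hP.one_le_fst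
  have h2 : (P (z1, z2)).1 = false → 1 ≤ z2 := hP.one_le_snd
  rcases hPz : P (z1, z2) with ⟨_ | _, _ | _⟩ <;> simp only [hPz, forall_const] at h1 h2 <;>
    simp only [ppTrans, hPz] at h <;>
    rcases eq_or_eq_of_ite_add_ite_ne_zero h with rfl | rfl <;>
    simp only [ppHarmonic] <;> push_cast [h1, h2] <;> ring_nf <;> simp [hl1.le, hl2.le]

lemma abs_ppHarmonic_sub_mem_Ioc (hl1 : 0 < l1) (hl2 : 0 < l2) (hP : NonIdling P)
    {z z' : PPState} (h : ppTrans l1 l2 P z z' ≠ 0) :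
    |ppHarmonic l1 l2 z' - ppHarmonic l1 l2 z| ∈ Set.Ioc 0 (l1⁻¹ + l2⁻¹) := by
  rcases abs_ppHarmonic_sub_of_ppTrans_ne_zero hl1 hl2 hP h with h | h <;> rw [h] <;>
    constructor <;> first | positivity | simp [hl1.le, hl2.le]

end PushPull

section Realization

variable {Ω S : Type} {mΩ : MeasurableSpace Ω} [MeasurableSpace S]
  {μ : Measure Ω} {ℱ : Filtration ℕ mΩ} {X : ℕ → Ω → S} {p : S → S → ℝ}

lemma IsRealization.measurable (hX : IsRealization μ ℱ X p) (n : ℕ) : Measurable (X n) :=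
  (hX.1 n).mono (ℱ.le n) le_rfl

lemma IsRealization.measureReal_inter [MeasurableSingletonClass S] [IsFiniteMeasure μ]
    (hX : IsRealization μ ℱ X p) (n : ℕ) (z z' : S) :
    μ.real (X n ⁻¹' {z} ∩ X (n + 1) ⁻¹' {z'}) = p z z' * μ.real (X n ⁻¹' {z}) := by
  have hA : MeasurableSet[ℱ n] (X n ⁻¹' {z}) := hX.1 n (measurableSet_singleton z)
  have hB : MeasurableSet {ω | X (n + 1) ω = z'} :=
    hX.measurable (n + 1) (measurableSet_singleton z')
  calc μ.real (X n ⁻¹' {z} ∩ X (n + 1) ⁻¹' {z'})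
      = ∫ ω in X n ⁻¹' {z}, {ω | X (n + 1) ω = z'}.indicator (fun _ ↦ (1 : ℝ)) ω ∂μ := by
        rw [setIntegral_indicator hB]
        simp [Set.preimage]
    _ = ∫ ω in X n ⁻¹' {z},
          (μ[{ω | X (n + 1) ω = z'}.indicator (fun _ ↦ (1 : ℝ)) | ℱ n]) ω ∂μ :=
        (setIntegral_condExp (ℱ.le n) ((integrable_const 1).indicator hB) hA).symm
    _ = ∫ _ in X n ⁻¹' {z}, p z z' ∂μ := by
        refine setIntegral_congr_ae (ℱ.le n _ hA) ?_
        filter_upwards [hX.2 n z z'] with ω hω hz using hω hz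
    _ = p z z' * μ.real (X n ⁻¹' {z}) := by simp [mul_comm]

lemma IsRealization.ae_trans_ne_zero [MeasurableSingletonClass S] [Countable S]
    [IsFiniteMeasure μ] (hX : IsRealization μ ℱ X p) :
    ∀ᵐ ω ∂μ, ∀ n, p (X n ω) (X (n + 1) ω) ≠ 0 := by
  have key : ∀ᵐ ω ∂μ, ∀ n z z', X n ω = z → X (n + 1) ω = z' → p z z' ≠ 0 := by
    simp only [ae_all_iff]
    intro n z z'
    by_cases hp : p z z' = 0
    · have hnull : μ (X n ⁻¹' {z} ∩ X (n + 1) ⁻¹' {z'}) = 0 := by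
        rw [← measureReal_eq_zero_iff, hX.measureReal_inter, hp, zero_mul]
      filter_upwards [measure_eq_zero_iff_ae_notMem.1 hnull] with ω hω h h'
      exact absurd ⟨h, h'⟩ hω
    · exact .of_forall fun _ _ _ ↦ hp
  filter_upwards [key] with ω hω n using hω n _ _ rfl rfl

lemma IsRealization.condExp_comp_succ [MeasurableSingletonClass S] [Countable S]
    (hX : IsRealization μ ℱ X p) {f : S → ℝ} (hf : ∀ z, ∑' z', p z z' * f z' = f z) (n : ℕ)
    (hint : Integrable (fun ω ↦ f (X (n + 1) ω)) μ) :
    μ[fun ω ↦ f (X (n + 1) ω) | ℱ n] =ᵐ[μ] fun ω ↦ f (X n ω) := by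
  set ind : S → Ω → ℝ := fun z' ↦ {ω | X (n + 1) ω = z'}.indicator (fun _ ↦ 1) with hind
  have hind_meas : ∀ z', Measurable (ind z') := fun z' ↦
    measurable_const.indicator (hX.measurable (n + 1) (measurableSet_singleton z'))
  have hdecomp : (fun ω ↦ f (X (n + 1) ω)) = fun ω ↦ ∑' z', f z' * ind z' ω := by
    ext ω
    rw [tsum_eq_single (X (n + 1) ω) fun z' hz' ↦ by simp [hind, Ne.symm hz']]
    simp [hind]
  have hsum : ∑' z', ∫⁻ ω, ‖f z' * ind z' ω‖ₑ ∂μ ≠ ∞ := by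
    rw [← lintegral_tsum fun z' ↦ ((hind_meas z').const_mul _).enorm.aemeasurable]
    convert hint.2.ne using 3 with ω
    rw [tsum_eq_single (X (n + 1) ω) fun z' hz' ↦ by simp [hind, Ne.symm hz']]
    simp [hind]
  have hcond : ∀ᵐ ω ∂μ, ∀ z z', X n ω = z → (μ[ind z' | ℱ n]) ω = p z z' := by
    simp only [ae_all_iff]
    exact hX.2 n
  have hsmul : ∀ᵐ ω ∂μ, ∀ z',
      (μ[fun ω ↦ f z' * ind z' ω | ℱ n]) ω = f z' * (μ[ind z' | ℱ n]) ω := by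
    rw [ae_all_iff]
    exact fun z' ↦ condExp_smul (f z') (ind z') _
  rw [hdecomp]
  filter_upwards [condExp_tsum (m := ℱ n)
    (fun z' ↦ ((hind_meas z').const_mul _).aestronglyMeasurable) hsum, hcond, hsmul]
    with ω h1 h2 h3
  rw [h1, ← hf (X n ω)]
  congr 1 with z'
  rw [h3, h2 _ _ rfl, mul_comm]

lemma IsRealization.martingale_comp [MeasurableSingletonClass S] [Countable S]
    [IsFiniteMeasure μ] (hX : IsRealization μ ℱ X p) {f : S → ℝ}
    (hf : ∀ z, ∑' z', p z z' * f z' = f z) {C : ℝ} (hC : ∀ z z', p z z' ≠ 0 → |f z' - f z| ≤ C)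
    (h0 : Integrable (fun ω ↦ f (X 0 ω)) μ) : Martingale (fun n ω ↦ f (X n ω)) ℱ μ := by
  have hmeas : ∀ n, StronglyMeasurable[ℱ n] fun ω ↦ f (X n ω) := fun n ↦
    ((measurable_of_countable f).comp (hX.1 n)).stronglyMeasurable
  have hint : ∀ n, Integrable (fun ω ↦ f (X n ω)) μ := fun n ↦
    (h0.abs.add (integrable_const (n * C))).mono'
      ((hmeas n).mono (ℱ.le n)).aestronglyMeasurable <| by
        filter_upwards [hX.ae_trans_ne_zero] with ω hω
        exact abs_le_abs_zero_add_mul_of_abs_sub_le (u := (f <| X · ω)) (fun k ↦ hC _ _ (hω k)) n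
  exact martingale_nat hmeas hint fun n ↦ (hX.condExp_comp_succ hf n (hint _)).symm

end Realization

namespace MeasureTheory

variable {Ω : Type*} {mΩ : MeasurableSpace Ω} {μ : Measure Ω} [IsFiniteMeasure μ]
  {ℱ : Filtration ℕ mΩ} {M : ℕ → Ω → ℝ} {τ : Ω → WithTop ℕ}

theorem Martingale.stoppedProcess (hM : Martingale M ℱ μ) (hτ : IsStoppingTime ℱ τ) :
    Martingale (stoppedProcess M τ) ℱ μ :=
  martingale_iff.2 ⟨by simpa using (hM.neg.submartingale.stoppedProcess hτ).neg,
    hM.submartingale.stoppedProcess hτ⟩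

/- Bounded increments make `|M₀| + C τ` an integrable dominating function for the stopped
process, so the martingale identity `E[M_{τ ∧ (n + k)} | ℱ k] = M_{τ ∧ k}` passes to the limit. -/
theorem condExp_stoppedValue_ae_eq_stoppedProcess (hM : Martingale M ℱ μ) {C : ℝ}
    (hinc : ∀ᵐ ω ∂μ, ∀ n, |M (n + 1) ω - M n ω| ≤ C) (hτ : IsStoppingTime ℱ τ)
    (hτ_fin : ∀ᵐ ω ∂μ, τ ω ≠ ⊤) (hτ_int : Integrable (fun ω ↦ ((τ ω).untopA : ℝ)) μ)
    (k : ℕ) : μ[stoppedValue M τ | ℱ k] =ᵐ[μ] stoppedProcess M τ k := by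
  have hstop := hM.stoppedProcess hτ
  set B : Ω → ℝ := fun ω ↦ |M 0 ω| + C * (τ ω).untopA
  have hB : Integrable B μ := (hM.integrable 0).abs.add (hτ_int.const_mul C)
  have hbound : ∀ n, ∀ᵐ ω ∂μ, ‖(stoppedProcess M τ n ω)‖ ≤ B ω := by
    intro n
    filter_upwards [hinc, hτ_fin] with ω hω hτω
    obtain ⟨t, ht⟩ := WithTop.ne_top_iff_exists.1 hτω
    have hC : 0 ≤ C := (abs_nonneg _).trans (hω 0)
    simp only [stoppedProcess, ← ht, B, Real.norm_eq_abs, ← WithTop.coe_min, WithTop.untopA,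
      WithTop.untopD_coe]
    calc |M (min n t) ω| ≤ |M 0 ω| + (min n t : ℕ) * C :=
          abs_le_abs_zero_add_mul_of_abs_sub_le (u := (M · ω)) hω _
      _ ≤ |M 0 ω| + C * t := by rw [mul_comm]; gcongr; exact_mod_cast min_le_right n t
  have hlim : ∀ᵐ ω ∂μ,
      Tendsto (fun n ↦ stoppedProcess M τ (n + k) ω) atTop (𝓝 (stoppedValue M τ ω)) := by
    filter_upwards [hτ_fin] with ω hτω
    obtain ⟨t, ht⟩ := WithTop.ne_top_iff_exists.1 hτω
    refine tendsto_atTop_of_eventually_const (i₀ := t) fun n hn ↦ ?_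
    rw [stoppedProcess_eq_of_ge (by rw [← ht]; exact_mod_cast by omega), stoppedValue]
  refine (tendsto_condExp_unique _ (fun _ ↦ stoppedProcess M τ k) _ _
    (fun n ↦ hstop.integrable _) (fun _ ↦ hstop.integrable k) hlim
    (.of_forall fun _ ↦ tendsto_const_nhds) B hB B hB (fun n ↦ hbound _) (fun _ ↦ hbound k)
    fun n ↦ ?_).trans (hstop.condExp_ae_eq le_rfl)
  exact (hstop.condExp_ae_eq (Nat.le_add_left k n)).trans (hstop.condExp_ae_eq le_rfl).symm

theorem stoppedProcess_ae_eq_const_of_stoppedValue (hM : Martingale M ℱ μ) {C : ℝ}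
    (hinc : ∀ᵐ ω ∂μ, ∀ n, |M (n + 1) ω - M n ω| ≤ C) (hτ : IsStoppingTime ℱ τ)
    (hτ_fin : ∀ᵐ ω ∂μ, τ ω ≠ ⊤) (hτ_int : Integrable (fun ω ↦ ((τ ω).untopA : ℝ)) μ) {c : ℝ}
    (hc : stoppedValue M τ =ᵐ[μ] fun _ ↦ c) (k : ℕ) : stoppedProcess M τ k =ᵐ[μ] fun _ ↦ c :=
  (condExp_stoppedValue_ae_eq_stoppedProcess hM hinc hτ hτ_fin hτ_int k).symm.trans
    ((condExp_congr_ae hc).trans (.of_eq (condExp_const (ℱ.le k) c)))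

theorem stoppedProcess_hittingAfter_one {β : Type*} {X : ℕ → Ω → β} {s : Set β} {ω : Ω}
    (h : X 0 ω ∉ s) : stoppedProcess M (hittingAfter X s 0) 1 ω = M 1 ω :=
  stoppedProcess_eq_of_le <| not_lt.1 fun hlt ↦ by
    obtain ⟨j, hj, hjs⟩ := hittingAfter_lt_iff.1 hlt
    obtain rfl : j = 0 := by simpa using hj
    exact h hjs

end MeasureTheory

section HitTime

variable {Ω S : Type*} {X : ℕ → Ω → S} {y : S} {ω : Ω}

lemma measurable_hitTime [MeasurableSpace S] [MeasurableSingletonClass S]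
    {mΩ : MeasurableSpace Ω} (hX : ∀ n, Measurable (X n)) (y : S) :
    Measurable (hitTime X y) := by
  classical
  have h : hitTime X y = fun ω ↦ ⨅ n, if X n ω = y then (n : ℝ≥0∞) else ⊤ := by
    ext ω
    change sInf ((fun n : ℕ ↦ (n : ℝ≥0∞)) '' {n | X n ω = y}) = _
    simp only [sInf_image, Set.mem_ofPred_eq, iInf_eq_if]
  rw [h]
  exact .iInf fun n ↦ .ite (hX n (measurableSet_singleton y)) measurable_const measurable_const

lemma exists_of_hitTime_lt_top (h : hitTime X y ω < ⊤) : ∃ n, X n ω = y := by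
  contrapose! h
  simp [hitTime, h]

lemma hitTime_eq_of_forall_lt {t : ℕ} (hy : X t ω = y) (hmin : ∀ j < t, X j ω ≠ y) :
    hitTime X y ω = t :=
  le_antisymm (sInf_le ⟨t, hy, rfl⟩)
    (le_sInf fun _ ⟨n, hn, hnt⟩ ↦ hnt ▸ by exact_mod_cast not_lt.1 fun h ↦ hmin n h hn)

lemma hitTime_eq_untopA_hittingAfter (h : hittingAfter X {y} 0 ω ≠ ⊤) :
    hitTime X y ω = (hittingAfter X {y} 0 ω).untopA :=
  hitTime_eq_of_forall_lt (hittingAfter_mem_set_of_ne_top h) fun j hj ↦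
    notMem_of_lt_hittingAfter ((WithTop.lt_untopA_iff h).1 hj) (Nat.zero_le j)

variable [MeasurableSpace S] [MeasurableSingletonClass S] {mΩ : MeasurableSpace Ω}
  {μ : Measure Ω}

lemma ae_hittingAfter_ne_top (hX : ∀ n, Measurable (X n))
    (hT : ∫⁻ ω, hitTime X y ω ∂μ ≠ ⊤) : ∀ᵐ ω ∂μ, hittingAfter X {y} 0 ω ≠ ⊤ := by
  filter_upwards [ae_lt_top (measurable_hitTime hX y) hT] with ω hω htop
  obtain ⟨n, hn⟩ := exists_of_hitTime_lt_top hω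
  exact hittingAfter_eq_top_iff.1 htop n (Nat.zero_le n) hn

lemma integrable_untopA_hittingAfter (hX : ∀ n, Measurable (X n))
    (hT : ∫⁻ ω, hitTime X y ω ∂μ ≠ ⊤) :
    Integrable (fun ω ↦ ((hittingAfter X {y} 0 ω).untopA : ℝ)) μ := by
  refine (integrable_toReal_of_lintegral_ne_top
    (measurable_hitTime hX y).aemeasurable hT).congr ?_
  filter_upwards [ae_hittingAfter_ne_top hX hT] with ω h
  simp [hitTime_eq_untopA_hittingAfter h]

end HitTime

/-- Non-stabilizability of the critical push-pull network, hitting-time form: for any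
non-idling policy `P`, any realization `X` of the induced chain started at `x`, and any
state `y` with `λ₁ x₁ - λ₂ x₂ ≠ λ₁ y₁ - λ₂ y₂`, the hitting time of `y` has infinite
expectation. -/
theorem pushPull_hitting_time_infinite (l1 l2 : ℝ) (hl1 : 0 < l1) (hl2 : 0 < l2)
    (P : PPState → PPAction) (hP : NonIdling P)
    {Ω : Type} {mΩ : MeasurableSpace Ω} (μ : Measure Ω) [IsProbabilityMeasure μ]
    (ℱ : Filtration ℕ mΩ) (X : ℕ → Ω → PPState)
    (x : PPState) (hX0 : ∀ᵐ ω ∂μ, X 0 ω = x)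
    (hX : IsRealization μ ℱ X (ppTrans l1 l2 P))
    (y : PPState) (hxy : ppG l1 l2 x ≠ ppG l1 l2 y) :
    ∫⁻ ω, hitTime X y ω ∂μ = ⊤ := by
  by_contra hT
  set f := ppHarmonic l1 l2
  set τ := hittingAfter X {y} 0
  have hstep : ∀ z z', ppTrans l1 l2 P z z' ≠ 0 → |f z' - f z| ∈ Set.Ioc 0 (l1⁻¹ + l2⁻¹) :=
    fun _ _ ↦ abs_ppHarmonic_sub_mem_Ioc hl1 hl2 hP
  have hM : Martingale (fun n ω ↦ f (X n ω)) ℱ μ :=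
    hX.martingale_comp (tsum_ppTrans_mul_ppHarmonic hl1 hl2 hP) (fun z z' h ↦ (hstep z z' h).2)
      ((integrable_const (f x)).congr (hX0.mono fun ω h ↦ by simp [h]))
  have hinc : ∀ᵐ ω ∂μ, ∀ n, |f (X (n + 1) ω) - f (X n ω)| ≤ l1⁻¹ + l2⁻¹ := by
    filter_upwards [hX.ae_trans_ne_zero] with ω hω n using (hstep _ _ (hω n)).2
  have hτ_fin := ae_hittingAfter_ne_top hX.measurable hT
  have hstopped : ∀ k, stoppedProcess (fun n ω ↦ f (X n ω)) τ k =ᵐ[μ] fun _ ↦ f y :=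
    stoppedProcess_ae_eq_const_of_stoppedValue hM hinc
      (Adapted.isStoppingTime_hittingAfter hX.1 (measurableSet_singleton y)) hτ_fin
      (integrable_untopA_hittingAfter hX.measurable hT) <| by
        filter_upwards [hτ_fin] with ω h using congrArg f (hittingAfter_mem_set_of_ne_top h)
  have hxy' : x ≠ y := ne_of_apply_ne (ppG l1 l2) hxy
  have : ∀ᵐ ω ∂μ, False := by
    filter_upwards [hstopped 0, hstopped 1, hX0, hX.ae_trans_ne_zero] with ω h0 h1 hx hω
    rw [stoppedProcess_eq_of_le (le_hittingAfter ω)] at h0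
    rw [stoppedProcess_hittingAfter_one (hx ▸ hxy')] at h1
    simpa [h0, h1] using (hstep _ _ (hω 0)).1
  exact IsProbabilityMeasure.ne_zero μ (by simpa using this)
end

section
/- For the critical push-pull ring with an even number M of servers, the vector α ∈ ℝ^M with entries α_j = (−1)^{j+1}·λ_j^{−1} (that is, α = (+λ_1^{−1}, −λ_2^{−1}, +λ_3^{−1}, …, −λ_M^{−1})) satisfies D·α = 0, i.e., α is orthogonal to the drift Δ(u) of every action u ∈ {push,pull}^M. -/
open MeasureTheory
open scoped ENNReal

/-- Unnormalized drift row `d(u)` of action `u` in the push-pull ring with push rates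
`lam` and pull rates `mu` (`true` = push, `false` = pull). Entry `j` is: `λⱼ` if servers
`j` and `j+1` both push; `λⱼ - μⱼ` if server `j` pushes and server `j+1` pulls; `0` if
server `j` pulls and server `j+1` pushes; `-μⱼ` if both pull. -/
def ringd (M : ℕ) [NeZero M] (lam mu : Fin M → ℝ) (u : Fin M → Bool) (j : Fin M) : ℝ :=
  if u j then (if u (j + 1) then lam j else lam j - mu j)
  else (if u (j + 1) then 0 else -mu j)

/-- The total rate `r(u) = ∑ⱼ (λⱼ if server j pushes, else μ_{j-1})` of action `u`. -/
def ringr (M : ℕ) [NeZero M] (lam mu : Fin M → ℝ) (u : Fin M → Bool) : ℝ :=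
  ∑ j : Fin M, if u j then lam j else mu (j - 1)

/-- The normalized drift `Δ(u) = d(u) / r(u)` of action `u`. -/
noncomputable def ringDelta (M : ℕ) [NeZero M] (lam mu : Fin M → ℝ) (u : Fin M → Bool)
    (j : Fin M) : ℝ :=
  ringd M lam mu u j / ringr M lam mu u

/-- The `2^M × M` action drift matrix `D`, whose rows are the vectors `Δ(u)`. -/
noncomputable def ringD (M : ℕ) [NeZero M] (lam mu : Fin M → ℝ) :
    Matrix (Fin M → Bool) (Fin M) ℝ :=
  Matrix.of fun u j => ringDelta M lam mu u j

/-
With `μ = λ` every drift entry factors as `d(u)ⱼ = λⱼ (bⱼ + bⱼ₊₁ - 1)`, where `bⱼ ∈ {0, 1}`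
records whether server `j` pushes. Hence `d(u) · α = ∑ⱼ (-1)ʲ (bⱼ + bⱼ₊₁ - 1)`. On a ring of
even length the sign `(-1)ʲ` flips also across the wrap-around `M - 1 → 0`, so the alternating
sum of `bⱼ + bⱼ₊₁` telescopes to zero, and so does the alternating sum of the constant `1`.
-/

section AlternatingSums

variable {R : Type*} [Ring R] {M : ℕ}

theorem neg_one_pow_mod_of_even (hM : Even M) (n : ℕ) : (-1 : R) ^ (n % M) = (-1) ^ n := by
  rw [neg_one_pow_eq_pow_mod_two, Nat.mod_mod_of_dvd n (even_iff_two_dvd.mp hM),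
    ← neg_one_pow_eq_pow_mod_two]

theorem Fin.neg_one_pow_val_add_one [NeZero M] (hM : Even M) (j : Fin M) :
    (-1 : R) ^ ((j + 1 : Fin M) : ℕ) = -(-1) ^ (j : ℕ) := by
  rw [Fin.val_add, neg_one_pow_mod_of_even hM, pow_add, Fin.val_one', neg_one_pow_mod_of_even hM,
    pow_one, mul_neg_one]

theorem Fin.sum_neg_one_pow_val_of_even (hM : Even M) : ∑ j : Fin M, (-1 : R) ^ (j : ℕ) = 0 := by
  rw [Fin.sum_univ_eq_sum_range (fun j => (-1 : R) ^ j), neg_one_geom_sum, if_pos hM]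

theorem Fin.sum_neg_one_pow_mul_add_succ_of_even [NeZero M] (hM : Even M) (f : Fin M → R) :
    ∑ j : Fin M, (-1 : R) ^ (j : ℕ) * (f j + f (j + 1)) = 0 := by
  have hshift : ∑ j : Fin M, (-1 : R) ^ (j : ℕ) * f (j + 1)
      = -∑ j : Fin M, (-1 : R) ^ (j : ℕ) * f j := by
    rw [← Equiv.sum_comp (Equiv.addRight (1 : Fin M)) (fun j : Fin M => (-1 : R) ^ (j : ℕ) * f j),
      ← Finset.sum_neg_distrib]
    simp only [Equiv.coe_addRight, Fin.neg_one_pow_val_add_one hM, neg_mul, neg_neg]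
  rw [Finset.sum_congr rfl fun j _ => mul_add _ _ _, Finset.sum_add_distrib, hshift,
    add_neg_cancel]

end AlternatingSums

section PushPullRing

open Matrix

variable {M : ℕ} [NeZero M]

theorem ringD_mulVec_apply (lam mu v : Fin M → ℝ) (u : Fin M → Bool) :
    (ringD M lam mu *ᵥ v) u = ringd M lam mu u ⬝ᵥ v / ringr M lam mu u := by
  simp only [mulVec, dotProduct, ringD, of_apply, ringDelta, Finset.sum_div,
    div_mul_eq_mul_div]

theorem ringd_self (lam : Fin M → ℝ) (u : Fin M → Bool) (j : Fin M) :
    ringd M lam lam u j = lam j * ((u j).toNat + (u (j + 1)).toNat - 1) := by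
  unfold ringd
  cases u j <;> cases u (j + 1) <;> simp

theorem ringd_self_dotProduct_alternating (hM : Even M) (lam : Fin M → ℝ)
    (hlam : ∀ j, lam j ≠ 0) (u : Fin M → Bool) :
    ringd M lam lam u ⬝ᵥ (fun j : Fin M => (-1 : ℝ) ^ (j : ℕ) * (lam j)⁻¹) = 0 := by
  have hterm : ∀ j : Fin M, ringd M lam lam u j * ((-1 : ℝ) ^ (j : ℕ) * (lam j)⁻¹)
      = (-1 : ℝ) ^ (j : ℕ) * ((u j).toNat + (u (j + 1)).toNat) - (-1 : ℝ) ^ (j : ℕ) := by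
    intro j
    rw [ringd_self]
    field_simp [hlam j]
  simp only [dotProduct, hterm, Finset.sum_sub_distrib,
    Fin.sum_neg_one_pow_mul_add_succ_of_even hM (fun j => ((u j).toNat : ℝ)),
    Fin.sum_neg_one_pow_val_of_even hM, sub_zero]

end PushPullRing

theorem ring_Dalpha_eq_zero_general (M : ℕ) [NeZero M] (hMeven : Even M)
    (lam : Fin M → ℝ) (hlam : ∀ j, 0 < lam j) :
    Matrix.mulVec (ringD M lam lam) (fun j : Fin M => (-1 : ℝ) ^ (j : ℕ) * (lam j)⁻¹)
      = 0 := by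
  funext u
  rw [ringD_mulVec_apply, ringd_self_dotProduct_alternating hMeven lam (fun j => (hlam j).ne'),
    zero_div, Pi.zero_apply]

/-- For the critical push-pull ring (`μ = λ`) with an even number `M` of servers, the
vector `α` with entries `αⱼ = (-1)^(j+1) λⱼ⁻¹` (for 1-based `j`, i.e. alternating signs
starting with `+λ₁⁻¹`) satisfies `D α = 0`: it is orthogonal to the drift of every
action. -/
theorem ring_Dalpha_eq_zero (M : ℕ) [NeZero M] (hM : 2 ≤ M) (hMeven : Even M)
    (lam : Fin M → ℝ) (hlam : ∀ j, 0 < lam j) :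
    Matrix.mulVec (ringD M lam lam) (fun j : Fin M => (-1 : ℝ) ^ (j : ℕ) * (lam j)⁻¹)
      = 0 :=
  ring_Dalpha_eq_zero_general M hMeven lam hlam
end

section
/- For the critical push-pull ring with an even number M of servers, the action drift matrix D has rank exactly M − 1 over ℝ. -/
open MeasureTheory
open scoped ENNReal

/-!
In the critical case the drift is linear in the sign vector `s(u) ∈ {±1}^M` of the action:
`d(u)ⱼ = λⱼ (s(u)ⱼ + s(u)ⱼ₊₁) / 2`. Since `r(u) > 0` and the sign vectors span `ℝ^M`, the rows
of `D` span the range of the linear map `T x = (λⱼ (xⱼ + xⱼ₊₁) / 2)ⱼ`. A vector in the kernel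
of `T` satisfies `xⱼ₊₁ = -xⱼ` around the ring, which for even `M` leaves exactly the multiples
of the alternating vector `((-1)ʲ)ⱼ`; by rank–nullity `T`, and hence `D`, has rank `M - 1`.
-/

open Submodule

theorem Submodule.span_range_smul_of_ne_zero {K V ι : Type*} [Field K] [AddCommGroup V]
    [Module K V] (c : ι → K) (hc : ∀ i, c i ≠ 0) (v : ι → V) :
    span K (Set.range fun i => c i • v i) = span K (Set.range v) := by
  apply le_antisymm <;> rw [span_le] <;> rintro _ ⟨i, rfl⟩
  · exact smul_mem _ _ (subset_span ⟨i, rfl⟩)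
  · rw [← inv_smul_smul₀ (hc i) (v i)]
    exact smul_mem _ _ (subset_span ⟨i, rfl⟩)

def pushSign {ι : Type*} (u : ι → Bool) (j : ι) : ℝ := if u j then 1 else -1

theorem span_range_pushSign (ι : Type*) [Finite ι] [DecidableEq ι] :
    span ℝ (Set.range (pushSign (ι := ι))) = ⊤ := by
  rw [eq_top_iff, ← (Pi.basisFun ℝ ι).span_eq, span_le]
  rintro _ ⟨k, rfl⟩
  have hsingle : Pi.basisFun ℝ ι k =
      (2⁻¹ : ℝ) • (pushSign (fun _ => true) - pushSign fun j => decide (j ≠ k)) := by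
    funext j
    by_cases h : j = k <;> simp [pushSign, h]
    norm_num
  rw [hsingle]
  exact smul_mem _ _ (sub_mem (subset_span ⟨_, rfl⟩) (subset_span ⟨_, rfl⟩))

section Ring

variable {M : ℕ} [NeZero M]

noncomputable def ringDriftMap (lam : Fin M → ℝ) : (Fin M → ℝ) →ₗ[ℝ] (Fin M → ℝ) where
  toFun x j := lam j * (x j + x (j + 1)) / 2
  map_add' x y := by funext j; simp only [Pi.add_apply]; ring
  map_smul' c x := by funext j; simp only [Pi.smul_apply, smul_eq_mul, RingHom.id_apply]; ring

theorem ringd_self_eq (lam : Fin M → ℝ) (u : Fin M → Bool) :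
    ringd M lam lam u = ringDriftMap lam (pushSign u) := by
  funext j
  simp only [ringd, ringDriftMap, LinearMap.coe_mk, AddHom.coe_mk, pushSign]
  cases u j <;> cases u (j + 1) <;> simp only [Bool.false_eq_true, if_true, if_false] <;> ring

theorem ringr_pos {lam mu : Fin M → ℝ} (hlam : ∀ j, 0 < lam j) (hmu : ∀ j, 0 < mu j)
    (u : Fin M → Bool) : 0 < ringr M lam mu u :=
  Finset.sum_pos (fun j _ => by split_ifs; exacts [hlam j, hmu (j - 1)]) Finset.univ_nonempty

theorem span_range_ringD_self {lam : Fin M → ℝ} (hlam : ∀ j, 0 < lam j) :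
    span ℝ (Set.range (ringD M lam lam)) = LinearMap.range (ringDriftMap lam) := by
  have hrow : ringD M lam lam =
      fun u => (ringr M lam lam u)⁻¹ • ringDriftMap lam (pushSign u) := by
    funext u j
    simp [ringD, ringDelta, ringd_self_eq, div_eq_inv_mul]
  rw [hrow, span_range_smul_of_ne_zero _ (fun u => (inv_pos.2 (ringr_pos hlam hlam u)).ne'),
    LinearMap.range_eq_map, ← span_range_pushSign, map_span, ← Set.range_comp]
  rfl

def alternating (M : ℕ) (j : Fin M) : ℝ := (-1) ^ (j : ℕ)

theorem alternating_ne_zero : alternating M ≠ 0 :=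
  fun h => by simpa [alternating] using congrFun h 0

-- At the wrap-around `M - 1 ↦ 0` this needs `(-1) ^ M = 1`: this is where the parity enters.
theorem alternating_add_one (hM : Even M) (j : Fin M) :
    alternating M (j + 1) = -alternating M j := by
  have hval : ((j + 1 : Fin M) : ℕ) = (j + 1) % M := by
    rw [Fin.val_add, Fin.val_one', Nat.add_mod_mod]
  rw [alternating, alternating, hval, neg_one_pow_eq_pow_mod_two,
    Nat.mod_mod_of_dvd _ (even_iff_two_dvd.1 hM), ← neg_one_pow_eq_pow_mod_two, pow_succ,
    mul_neg_one]

open Fin.NatCast in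
theorem ker_ringDriftMap {lam : Fin M → ℝ} (hlam : ∀ j, lam j ≠ 0) (hM : Even M) :
    LinearMap.ker (ringDriftMap lam) = span ℝ {alternating M} := by
  apply le_antisymm
  · intro x hx
    have hstep : ∀ j : Fin M, x (j + 1) = -x j := fun j => by
      have hj := congrFun (LinearMap.mem_ker.1 hx) j
      simp only [ringDriftMap, LinearMap.coe_mk, AddHom.coe_mk, Pi.zero_apply] at hj
      have hsum := (mul_eq_zero.1 ((div_eq_zero_iff.1 hj).resolve_right two_ne_zero)).resolve_left
        (hlam j)
      linarith
    have hcast : ∀ n : ℕ, x (n : Fin M) = x 0 * (-1) ^ n := by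
      intro n
      induction n with
      | zero => simp
      | succ n ih => rw [Nat.cast_succ, hstep, ih, pow_succ]; ring
    refine mem_span_singleton.2 ⟨x 0, funext fun j => ?_⟩
    rw [Pi.smul_apply, smul_eq_mul, alternating, ← hcast, Fin.cast_val_eq_self]
  · rw [span_le, Set.singleton_subset_iff, SetLike.mem_coe, LinearMap.mem_ker]
    funext j
    simp only [ringDriftMap, LinearMap.coe_mk, AddHom.coe_mk, Pi.zero_apply,
      alternating_add_one hM, add_neg_cancel, mul_zero, zero_div]

end Ring

theorem ring_rank_even_general (M : ℕ) [NeZero M] (hMeven : Even M)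
    (lam : Fin M → ℝ) (hlam : ∀ j, 0 < lam j) :
    (ringD M lam lam).rank = M - 1 := by
  have hrankNullity := LinearMap.finrank_range_add_finrank_ker (ringDriftMap lam)
  rw [ker_ringDriftMap (fun j => (hlam j).ne') hMeven, finrank_span_singleton alternating_ne_zero,
    Module.finrank_fin_fun] at hrankNullity
  rw [Matrix.rank_eq_finrank_span_row, Matrix.row, span_range_ringD_self hlam]
  omega

/-- For the critical push-pull ring (`μ = λ`) with an even number `M` of servers, the
action drift matrix `D` has rank exactly `M - 1` over `ℝ`. -/
theorem ring_rank_even (M : ℕ) [NeZero M] (hM : 2 ≤ M) (hMeven : Even M)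
    (lam : Fin M → ℝ) (hlam : ∀ j, 0 < lam j) :
    (ringD M lam lam).rank = M - 1 :=
  ring_rank_even_general M hMeven lam hlam
end

section
/- For the critical two-server re-entrant line network, the vector α defined by α_k = Σ_{j=0}^{j̄(k)−1} μ_{ī(k),j}^{−1}·(−1)^{σ(ī(k),j)} satisfies Δ̂(i,j)⋅α = (−1)^{σ(i,j)} for every operation (i,j) with 0 ≤ j ≤ n_i. -/
open MeasureTheory
open scoped ENNReal

/-- `kbar`, `ibar`, `jbar` form a valid indexing of the `M` queues by the operations
`(i, j)` with `1 ≤ j ≤ nᵢ`: `kbar` is a bijection from the set of such operations onto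
`Fin M` with inverse components `ibar`, `jbar`. -/
def ReIndex (S M : ℕ) (n : Fin S → ℕ) (kbar : Fin S → ℕ → Fin M)
    (ibar : Fin M → Fin S) (jbar : Fin M → ℕ) : Prop :=
  (∀ (i : Fin S) (j : ℕ), 1 ≤ j → j ≤ n i →
      ibar (kbar i j) = i ∧ jbar (kbar i j) = j) ∧
  (∀ k : Fin M, 1 ≤ jbar k ∧ jbar k ≤ n (ibar k) ∧ kbar (ibar k) (jbar k) = k)

/-- Criticality: for each stream `i`, the total mean processing time required on server 1
equals that required on server 2, i.e.
`∑_{j ∈ C₁(i)} μᵢⱼ⁻¹ = ∑_{j ∈ C₂(i)} μᵢⱼ⁻¹` where `Cₗ(i) = {j ≤ nᵢ : σ(i,j) = ℓ}`. -/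
def ReCritical (S : ℕ) (n : Fin S → ℕ) (mu : Fin S → ℕ → ℝ) (sg : Fin S → ℕ → ℕ) :
    Prop :=
  ∀ i : Fin S,
    ∑ j ∈ (Finset.range (n i + 1)).filter (fun j => sg i j = 1), (mu i j)⁻¹ =
    ∑ j ∈ (Finset.range (n i + 1)).filter (fun j => sg i j = 2), (mu i j)⁻¹

/-- The vector `Δ̂(i, j) ∈ ℝ^M` of operation `(i, j)`:
`Δ̂(i,0) = μᵢ₀ e_{k̄(i,1)}`, `Δ̂(i,j) = μᵢⱼ (e_{k̄(i,j+1)} - e_{k̄(i,j)})` for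
`1 ≤ j ≤ nᵢ - 1`, and `Δ̂(i,nᵢ) = -μᵢₙᵢ e_{k̄(i,nᵢ)}`. -/
noncomputable def reDhat (S M : ℕ) (n : Fin S → ℕ) (mu : Fin S → ℕ → ℝ)
    (kbar : Fin S → ℕ → Fin M) (i : Fin S) (j : ℕ) : Fin M → ℝ :=
  fun k =>
    if j = 0 then (if k = kbar i 1 then mu i 0 else 0)
    else if j = n i then (if k = kbar i (n i) then -mu i (n i) else 0)
    else (if k = kbar i (j + 1) then mu i j else 0) +
         (if k = kbar i j then -mu i j else 0)

/-- The vector `α ∈ ℝ^M` with entries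
`α_k = ∑_{j=0}^{j̄(k)-1} μ_{ī(k),j}⁻¹ (-1)^{σ(ī(k),j)}`. -/
noncomputable def reAlpha (S M : ℕ) (mu : Fin S → ℕ → ℝ) (sg : Fin S → ℕ → ℕ)
    (ibar : Fin M → Fin S) (jbar : Fin M → ℕ) : Fin M → ℝ :=
  fun k => ∑ j ∈ Finset.range (jbar k), (mu (ibar k) j)⁻¹ * (-1 : ℝ) ^ sg (ibar k) j

/-! With `A_j = ∑_{l<j} μᵢₗ⁻¹ (-1)^{σ(i,l)}`, the entry of `α` at queue `k̄(i,j)` is `A_j`, so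
`Δ̂(i,j) ⬝ α = μᵢⱼ (A_{j+1} - A_j) = (-1)^{σ(i,j)}` once we read `A_0 = 0` and `A_{nᵢ+1} = 0`;
the second convention is exactly criticality, since `A_{nᵢ+1}` is the server-2 workload minus
the server-1 workload of stream `i`. -/

theorem Finset.sum_mul_neg_one_pow_eq_sub {ι R : Type*} [CommRing R] (s : Finset ι)
    (f : ι → R) (g : ι → ℕ) (hg : ∀ l ∈ s, g l = 1 ∨ g l = 2) :
    ∑ l ∈ s, f l * (-1 : R) ^ g l =
      ∑ l ∈ s.filter (fun l => g l = 2), f l - ∑ l ∈ s.filter (fun l => g l = 1), f l := by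
  have hfilter : s.filter (fun l => ¬ g l = 1) = s.filter (fun l => g l = 2) :=
    Finset.filter_congr fun l hl => by rcases hg l hl with h | h <;> simp [h]
  have hsign : ∀ m, ∑ l ∈ s.filter (fun l => g l = m), f l * (-1 : R) ^ g l =
      (-1) ^ m * ∑ l ∈ s.filter (fun l => g l = m), f l := fun m => by
    rw [Finset.mul_sum]
    exact Finset.sum_congr rfl fun l hl => by rw [(Finset.mem_filter.1 hl).2, mul_comm]
  rw [← Finset.sum_filter_add_sum_filter_not s (fun l => g l = 1), hfilter, hsign, hsign]
  ring

theorem ReCritical.sum_inv_mul_neg_one_pow_eq_zero {S : ℕ} {n : Fin S → ℕ}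
    {mu : Fin S → ℕ → ℝ} {sg : Fin S → ℕ → ℕ} (hcrit : ReCritical S n mu sg)
    (hsg : ∀ (i : Fin S) (j : ℕ), j ≤ n i → sg i j = 1 ∨ sg i j = 2) (i : Fin S) :
    ∑ l ∈ Finset.range (n i + 1), (mu i l)⁻¹ * (-1 : ℝ) ^ sg i l = 0 := by
  rw [Finset.sum_mul_neg_one_pow_eq_sub _ _ _
    fun l hl => hsg i l (Nat.lt_succ_iff.1 (Finset.mem_range.1 hl)), hcrit i, sub_self]

theorem ReIndex.reAlpha_kbar {S M : ℕ} {n : Fin S → ℕ} {kbar : Fin S → ℕ → Fin M}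
    {ibar : Fin M → Fin S} {jbar : Fin M → ℕ} (hidx : ReIndex S M n kbar ibar jbar)
    (mu : Fin S → ℕ → ℝ) (sg : Fin S → ℕ → ℕ) {i : Fin S} {j : ℕ} (h1 : 1 ≤ j) (hj : j ≤ n i) :
    reAlpha S M mu sg ibar jbar (kbar i j) =
      ∑ l ∈ Finset.range j, (mu i l)⁻¹ * (-1 : ℝ) ^ sg i l := by
  obtain ⟨hi, hj'⟩ := hidx.1 i j h1 hj
  simp only [reAlpha, hi, hj']

theorem reentrant_Dhat_dot_alpha_general (S M : ℕ)
    (n : Fin S → ℕ) (hn : ∀ i, 1 ≤ n i)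
    (mu : Fin S → ℕ → ℝ) (hmu : ∀ (i : Fin S) (j : ℕ), j ≤ n i → 0 < mu i j)
    (sg : Fin S → ℕ → ℕ) (hsg : ∀ (i : Fin S) (j : ℕ), j ≤ n i → sg i j = 1 ∨ sg i j = 2)
    (kbar : Fin S → ℕ → Fin M) (ibar : Fin M → Fin S) (jbar : Fin M → ℕ)
    (hidx : ReIndex S M n kbar ibar jbar)
    (hcrit : ReCritical S n mu sg)
    (i : Fin S) (j : ℕ) (hj : j ≤ n i) :
    ∑ k : Fin M, reDhat S M n mu kbar i j k * reAlpha S M mu sg ibar jbar k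
      = (-1 : ℝ) ^ sg i j := by
  have hμ : mu i j ≠ 0 := (hmu i j hj).ne'
  rcases j.eq_zero_or_pos with rfl | hj0
  · simp [reDhat, ite_mul, hidx.reAlpha_kbar mu sg le_rfl (hn i), hμ]
  rcases hj.eq_or_lt with rfl | hjn
  · have hcancel := hcrit.sum_inv_mul_neg_one_pow_eq_zero hsg i
    rw [Finset.sum_range_succ, add_eq_zero_iff_eq_neg] at hcancel
    simp [reDhat, ite_mul, hj0.ne', hidx.reAlpha_kbar mu sg (hn i) le_rfl, hcancel, hμ]
  · simp only [reDhat, hj0.ne', hjn.ne, if_false, add_mul, ite_mul, zero_mul,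
      Finset.sum_add_distrib, Finset.sum_ite_eq', Finset.mem_univ, if_true,
      hidx.reAlpha_kbar mu sg (Nat.le_add_left 1 j) hjn, hidx.reAlpha_kbar mu sg hj0 hj,
      Finset.sum_range_succ]
    field_simp
    ring

/-- For the critical two-server re-entrant line network, the vector `α` satisfies
`Δ̂(i,j) ⬝ α = (-1)^{σ(i,j)}` for every operation `(i, j)` with `0 ≤ j ≤ nᵢ`. -/
theorem reentrant_Dhat_dot_alpha (S M : ℕ) (hS : 1 ≤ S)
    (n : Fin S → ℕ) (hn : ∀ i, 1 ≤ n i)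
    (mu : Fin S → ℕ → ℝ) (hmu : ∀ (i : Fin S) (j : ℕ), j ≤ n i → 0 < mu i j)
    (sg : Fin S → ℕ → ℕ) (hsg : ∀ (i : Fin S) (j : ℕ), j ≤ n i → sg i j = 1 ∨ sg i j = 2)
    (hM : M = ∑ i, n i)
    (kbar : Fin S → ℕ → Fin M) (ibar : Fin M → Fin S) (jbar : Fin M → ℕ)
    (hidx : ReIndex S M n kbar ibar jbar)
    (hcrit : ReCritical S n mu sg)
    (i : Fin S) (j : ℕ) (hj : j ≤ n i) :
    ∑ k : Fin M, reDhat S M n mu kbar i j k * reAlpha S M mu sg ibar jbar k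
      = (-1 : ℝ) ^ sg i j :=
  reentrant_Dhat_dot_alpha_general S M n hn mu hmu sg hsg kbar ibar jbar hidx hcrit i j hj
end
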